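/- Let E : [0, ∞) → ℝ be continuously differentiable, nonincreasing, with E(t) > E∞ for all t in an interval [t₀, t₁], where E∞ is a constant. Suppose θ ∈ (0, 1/2) and g : [t₀, t₁] → [0, ∞) is continuous with −E'(t) ≥ g(t)·(E(t) − E∞)^{1−θ} on [t₀, t₁]. Then ∫_{t₀}^{t₁} g(t) dt ≤ (1/θ)·(E(t₀) − E∞)^{θ}. -/
import Mathlib


open Real MeasureTheory intervalIntegral

/-- Łojasiewicz-type integral estimate: if `E` is `C¹` and nonincreasing, `E > E∞` on
`[t₀,t₁]`, `g ≥ 0` is continuous and `-E' ≥ g (E - E∞)^{1-θ}` on `[t₀,t₁]` with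
`θ ∈ (0,1/2)`, then `∫_{t₀}^{t₁} g ≤ (1/θ)(E(t₀) - E∞)^θ`. -/
theorem stmt6 (E E' g : ℝ → ℝ) (Einf t₀ t₁ θ : ℝ)
    (ht : t₀ ≤ t₁) (hθ : θ ∈ Set.Ioo (0:ℝ) (1/2))
    (hE : ∀ t ≥ (0:ℝ), HasDerivAt E (E' t) t) (hE'c : Continuous E')
    (hmono : AntitoneOn E (Set.Ici (0:ℝ))) (ht₀ : 0 ≤ t₀)
    (hgt : ∀ t ∈ Set.Icc t₀ t₁, Einf < E t)
    (hg : Continuous g) (hgnn : ∀ t ∈ Set.Icc t₀ t₁, 0 ≤ g t)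
    (hineq : ∀ t ∈ Set.Icc t₀ t₁, g t * (E t - Einf) ^ (1 - θ) ≤ -E' t) :
    ∫ t in t₀..t₁, g t ≤ (1/θ) * (E t₀ - Einf) ^ θ := by
  obtain ⟨hθ0, hθh⟩ := hθ
  have hsub : Set.Icc t₀ t₁ ⊆ Set.Ici (0:ℝ) := fun t ht' => le_trans ht₀ ht'.1
  have hpos : ∀ t ∈ Set.Icc t₀ t₁, 0 < E t - Einf := fun t ht' => sub_pos.2 (hgt t ht')
  set φ : ℝ → ℝ := fun t => (E t - Einf) ^ θ with hφ
  set φ' : ℝ → ℝ := fun t => E' t * θ * (E t - Einf) ^ (θ - 1) with hφ'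
  have hd : ∀ t ∈ Set.uIcc t₀ t₁, HasDerivAt φ (φ' t) t := by
    intro t ht'
    rw [Set.uIcc_of_le ht] at ht'
    exact ((hE t (hsub ht')).sub_const Einf).rpow_const (Or.inl (hpos t ht').ne')
  have hEc : ContinuousOn E (Set.Icc t₀ t₁) := fun t ht' =>
    ((hE t (hsub ht')).continuousAt).continuousWithinAt
  have hφ'c : ContinuousOn φ' (Set.Icc t₀ t₁) := by
    apply ContinuousOn.mul
    · exact (hE'c.continuousOn).mul continuousOn_const
    · exact (hEc.sub continuousOn_const).rpow_const
        (fun t ht' => Or.inl (hpos t ht').ne')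
  have hint : IntervalIntegrable φ' volume t₀ t₁ := by
    apply ContinuousOn.intervalIntegrable
    rwa [Set.uIcc_of_le ht]
  have hftc : ∫ t in t₀..t₁, φ' t = φ t₁ - φ t₀ :=
    intervalIntegral.integral_eq_sub_of_hasDerivAt hd hint
  have hpt : ∀ t ∈ Set.Icc t₀ t₁, g t ≤ -(1/θ) * φ' t := by
    intro t ht'
    have h1 := hineq t ht'
    have hx := hpos t ht'
    have hpow : (0:ℝ) < (E t - Einf) ^ (1 - θ) := Real.rpow_pos_of_pos hx _
    have key : g t ≤ (-E' t) / (E t - Einf) ^ (1 - θ) := (le_div_iff₀ hpow).2 h1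
    have hrw : (E t - Einf) ^ (θ - 1) = ((E t - Einf) ^ (1 - θ))⁻¹ := by
      rw [show θ - 1 = -(1 - θ) by ring, Real.rpow_neg hx.le]
    calc g t ≤ (-E' t) / (E t - Einf) ^ (1 - θ) := key
      _ = -(1/θ) * φ' t := by
          simp only [hφ', hrw]
          field_simp
  have hφt₁ : 0 ≤ φ t₁ := Real.rpow_nonneg (hpos t₁ ⟨ht, le_refl _⟩).le θ
  have hθinv : (0:ℝ) < 1/θ := by positivity
  calc ∫ t in t₀..t₁, g t
      ≤ ∫ t in t₀..t₁, -(1/θ) * φ' t := by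
        apply intervalIntegral.integral_mono_on ht (hg.intervalIntegrable _ _)
          (hint.const_mul _) hpt
    _ = -(1/θ) * (φ t₁ - φ t₀) := by
        rw [intervalIntegral.integral_const_mul, hftc]
    _ ≤ (1/θ) * φ t₀ := by nlinarith
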